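/- arXiv:1811.04337 — 4 statements merged into one kernel-verified Lean document; each statement's English description precedes it below -/
import Mathlib

section
/- The set p4m = {g(m,r,t) : m ∈ {0,1}³, r ∈ ℤ³, t ∈ ℤ³} is a subgroup of GL₄(ℝ): it contains the 4×4 identity matrix, the product of any two of its elements again lies in p4m, and the inverse of any of its elements lies in p4m. (Thus p4m, comprising all compositions of integer translations, rotations by multiples of 90° about the coordinate axes, and axis-aligned mirror reflections, is a symmetry group under matrix multiplication.) -/
open Matrix Real

/-- `R₁(m,r)`: rotation by `r·90°` (with optional mirroring `m`) acting in the
rows/columns 1,2 of a 4×4 homogeneous-coordinate matrix. -/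
noncomputable def R1 (m : Fin 2) (r : ℤ) : Matrix (Fin 4) (Fin 4) ℝ :=
  !![(-1 : ℝ) ^ (m : ℕ) * Real.cos (r * (π / 2)),
      -((-1 : ℝ) ^ (m : ℕ)) * Real.sin (r * (π / 2)), 0, 0;
     Real.sin (r * (π / 2)), Real.cos (r * (π / 2)), 0, 0;
     0, 0, 1, 0;
     0, 0, 0, 1]

/-- `R₂(m,r)`: the analogous matrix whose 2×2 block occupies rows/columns 2 and 3,
with 1's at positions (1,1) and (4,4). -/
noncomputable def R2 (m : Fin 2) (r : ℤ) : Matrix (Fin 4) (Fin 4) ℝ :=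
  !![1, 0, 0, 0;
     0, (-1 : ℝ) ^ (m : ℕ) * Real.cos (r * (π / 2)),
        -((-1 : ℝ) ^ (m : ℕ)) * Real.sin (r * (π / 2)), 0;
     0, Real.sin (r * (π / 2)), Real.cos (r * (π / 2)), 0;
     0, 0, 0, 1]

/-- `R₃(m,r)`: the analogous matrix whose 2×2 block occupies rows/columns 3 and 1
(in that order), with 1's at positions (2,2) and (4,4). -/
noncomputable def R3 (m : Fin 2) (r : ℤ) : Matrix (Fin 4) (Fin 4) ℝ :=
  !![Real.cos (r * (π / 2)), 0, Real.sin (r * (π / 2)), 0;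
     0, 1, 0, 0;
     -((-1 : ℝ) ^ (m : ℕ)) * Real.sin (r * (π / 2)), 0,
        (-1 : ℝ) ^ (m : ℕ) * Real.cos (r * (π / 2)), 0;
     0, 0, 0, 1]

/-- `T(t)`: the 4×4 identity matrix with its fourth column replaced by `(t₁,t₂,t₃,1)ᵀ`. -/
def T (t : ℤ × ℤ × ℤ) : Matrix (Fin 4) (Fin 4) ℝ :=
  !![1, 0, 0, (t.1 : ℝ);
     0, 1, 0, (t.2.1 : ℝ);
     0, 0, 1, (t.2.2 : ℝ);
     0, 0, 0, 1]

/-- `g(m,r,t) = R₁(m₁,r₁)·R₂(m₂,r₂)·R₃(m₃,r₃)·T(t)`. -/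
noncomputable def g (m : Fin 2 × Fin 2 × Fin 2) (r t : ℤ × ℤ × ℤ) :
    Matrix (Fin 4) (Fin 4) ℝ :=
  R1 m.1 r.1 * R2 m.2.1 r.2.1 * R3 m.2.2 r.2.2 * T t

/-- The set `p4m = {g(m,r,t)}`. -/
def p4m : Set (Matrix (Fin 4) (Fin 4) ℝ) :=
  {A | ∃ (m : Fin 2 × Fin 2 × Fin 2) (r t : ℤ × ℤ × ℤ), A = g m r t}

/-- The set `p4 = {g(0,r,t)}` (no mirroring). -/
def p4 : Set (Matrix (Fin 4) (Fin 4) ℝ) :=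
  {A | ∃ (r t : ℤ × ℤ × ℤ), A = g (0, 0, 0) r t}


/-!
Each `g(m,r,t)` is the homogeneous matrix of an affine map `x ↦ Q x + v` of `ℝ³` with `Q` an
integer orthogonal matrix and `v ∈ ℤ³`, because `cos (rπ/2)` and `sin (rπ/2)` are integers.
Conversely every such map occurs: the column `Q e₂` is a signed basis vector, which some
rotation `R₁ R₂` also sends `e₂` to; the rest of `Q` then fixes `e₂`, so it is an integer
orthogonal map of the `(e₃, e₁)`-plane, i.e. some `R₃(m, r)`. Hence `p4m` is the image of the
group `O(3, ℤ) ⋉ ℤ³`, which is closed under products and inverses.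
-/

theorem col_mul_eq_mulVec {l m n α : Type*} [Fintype m] [NonUnitalNonAssocSemiring α]
    (A : Matrix l m α) (B : Matrix m n α) (j : n) : (A * B).col j = A *ᵥ B.col j :=
  rfl

section AffineMatrix

variable {n : ℕ} {R : Type*} [CommRing R]

def affineMatrix (Q : Matrix (Fin n) (Fin n) R) (v : Fin n → R) :
    Matrix (Fin (n + 1)) (Fin (n + 1)) R :=
  (fromBlocks Q (replicateCol (Fin 1) v) 0 1).submatrix finSumFinEquiv.symm finSumFinEquiv.symm

theorem affineMatrix_one_zero : affineMatrix (1 : Matrix (Fin n) (Fin n) R) 0 = 1 := by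
  simp [affineMatrix, fromBlocks_one, submatrix_one_equiv]

theorem affineMatrix_mul (Q Q' : Matrix (Fin n) (Fin n) R) (v v' : Fin n → R) :
    affineMatrix Q v * affineMatrix Q' v' = affineMatrix (Q * Q') (Q *ᵥ v' + v) := by
  simp [affineMatrix, submatrix_mul_equiv, fromBlocks_multiply, ← replicateCol_mulVec]

theorem transpose_mem_orthogonalGroup {Q : Matrix (Fin n) (Fin n) R}
    (hQ : Q ∈ orthogonalGroup (Fin n) R) : Qᵀ ∈ orthogonalGroup (Fin n) R := by
  rw [mem_orthogonalGroup_iff, transpose_transpose]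
  exact (mem_orthogonalGroup_iff' _ _).mp hQ

theorem affineMatrix_eq_mul_translation {Q : Matrix (Fin n) (Fin n) R}
    (hQ : Q ∈ orthogonalGroup (Fin n) R) (v : Fin n → R) :
    affineMatrix Q v = affineMatrix Q 0 * affineMatrix 1 (Qᵀ *ᵥ v) := by
  rw [affineMatrix_mul, Matrix.mul_one, mulVec_mulVec, (mem_orthogonalGroup_iff _ _).mp hQ,
    one_mulVec, add_zero]

variable (n R) in
def affineOrthogonalGroup : Submonoid (Matrix (Fin (n + 1)) (Fin (n + 1)) R) where
  carrier := {A | ∃ Q ∈ orthogonalGroup (Fin n) R, ∃ v, A = affineMatrix Q v}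
  one_mem' := ⟨1, one_mem _, 0, affineMatrix_one_zero.symm⟩
  mul_mem' := by
    rintro _ _ ⟨Q, hQ, v, rfl⟩ ⟨Q', hQ', v', rfl⟩
    exact ⟨Q * Q', mul_mem hQ hQ', _, affineMatrix_mul ..⟩

theorem affineMatrix_mem {Q : Matrix (Fin n) (Fin n) R} (hQ : Q ∈ orthogonalGroup (Fin n) R)
    (v : Fin n → R) : affineMatrix Q v ∈ affineOrthogonalGroup n R :=
  ⟨Q, hQ, v, rfl⟩

theorem exists_mul_eq_one_of_mem_affineOrthogonalGroup
    {A : Matrix (Fin (n + 1)) (Fin (n + 1)) R} (hA : A ∈ affineOrthogonalGroup n R) :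
    ∃ B ∈ affineOrthogonalGroup n R, A * B = 1 := by
  obtain ⟨Q, hQ, v, rfl⟩ := hA
  refine ⟨_, affineMatrix_mem (transpose_mem_orthogonalGroup hQ) (-(Qᵀ *ᵥ v)), ?_⟩
  rw [affineMatrix_mul, mulVec_neg, mulVec_mulVec, (mem_orthogonalGroup_iff _ _).mp hQ,
    one_mulVec, neg_add_cancel, affineMatrix_one_zero]

end AffineMatrix

theorem castRingHom_mapMatrix_affineMatrix (Q : Matrix (Fin 3) (Fin 3) ℤ) (v : Fin 3 → ℤ) :
    (Int.castRingHom ℝ).mapMatrix (affineMatrix Q v) =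
      !![(Q 0 0 : ℝ), Q 0 1, Q 0 2, v 0;
         Q 1 0, Q 1 1, Q 1 2, v 1;
         Q 2 0, Q 2 1, Q 2 2, v 2;
         0, 0, 0, 1] := by
  ext i j
  fin_cases i <;> fin_cases j <;> simp [affineMatrix] <;> rfl

def icos (r : ℤ) : ℤ := if r % 4 = 0 then 1 else if r % 4 = 2 then -1 else 0

def isin (r : ℤ) : ℤ := icos (r - 1)

theorem icos_add_one (r : ℤ) : icos (r + 1) = -isin r := by
  unfold isin icos; split_ifs <;> omega

theorem isin_sub_one (r : ℤ) : isin (r - 1) = -icos r := by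
  unfold isin icos; split_ifs <;> omega

theorem cos_sin_int_mul_pi_div_two (r : ℤ) :
    cos (r * (π / 2)) = icos r ∧ sin (r * (π / 2)) = isin r := by
  induction r using Int.induction_on with
  | zero => simp [icos, isin]
  | succ k ih =>
    rw [Int.cast_add, Int.cast_one, add_mul, one_mul, cos_add_pi_div_two, sin_add_pi_div_two,
      ih.1, ih.2, icos_add_one]
    simp [isin]
  | pred k ih =>
    rw [Int.cast_sub, Int.cast_one, sub_mul, one_mul, cos_sub_pi_div_two, sin_sub_pi_div_two,
      ih.1, ih.2, isin_sub_one]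
    simp [isin]

theorem icos_sq_add_isin_sq (r : ℤ) : icos r ^ 2 + isin r ^ 2 = 1 := by
  have h := cos_sq_add_sin_sq (r * (π / 2))
  rw [(cos_sin_int_mul_pi_div_two r).1, (cos_sin_int_mul_pi_div_two r).2] at h
  exact_mod_cast h

theorem exists_icos_isin_eq {c s : ℤ} (h : c ^ 2 + s ^ 2 = 1) :
    ∃ r, icos r = c ∧ isin r = s := by
  have hc : -1 ≤ c ∧ c ≤ 1 := by constructor <;> nlinarith [sq_nonneg s]
  have hs : -1 ≤ s ∧ s ≤ 1 := by constructor <;> nlinarith [sq_nonneg c]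
  obtain ⟨hc₁, hc₂⟩ := hc
  obtain ⟨hs₁, hs₂⟩ := hs
  interval_cases c <;> interval_cases s <;> norm_num at h
  exacts [⟨2, by decide⟩, ⟨3, by decide⟩, ⟨1, by decide⟩, ⟨0, by decide⟩]

theorem exists_neg_one_pow_eq {e : ℤ} (he : e ^ 2 = 1) : ∃ m : Fin 2, (-1) ^ (m : ℕ) = e := by
  rcases sq_eq_one_iff.mp he with rfl | rfl
  exacts [⟨0, rfl⟩, ⟨1, rfl⟩]

def R1Int (m : Fin 2) (r : ℤ) : Matrix (Fin 3) (Fin 3) ℤ :=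
  !![(-1) ^ (m : ℕ) * icos r, -(-1) ^ (m : ℕ) * isin r, 0;
     isin r, icos r, 0;
     0, 0, 1]

def R2Int (m : Fin 2) (r : ℤ) : Matrix (Fin 3) (Fin 3) ℤ :=
  !![1, 0, 0;
     0, (-1) ^ (m : ℕ) * icos r, -(-1) ^ (m : ℕ) * isin r;
     0, isin r, icos r]

def R3Int (m : Fin 2) (r : ℤ) : Matrix (Fin 3) (Fin 3) ℤ :=
  !![icos r, 0, isin r;
     0, 1, 0;
     -(-1) ^ (m : ℕ) * isin r, 0, (-1) ^ (m : ℕ) * icos r]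

theorem R1_eq_affineMatrix (m : Fin 2) (r : ℤ) :
    R1 m r = (Int.castRingHom ℝ).mapMatrix (affineMatrix (R1Int m r) 0) := by
  obtain ⟨hc, hs⟩ := cos_sin_int_mul_pi_div_two r
  rw [castRingHom_mapMatrix_affineMatrix]
  ext i j
  fin_cases i <;> fin_cases j <;> simp [R1, R1Int, hc, hs]

theorem R2_eq_affineMatrix (m : Fin 2) (r : ℤ) :
    R2 m r = (Int.castRingHom ℝ).mapMatrix (affineMatrix (R2Int m r) 0) := by
  obtain ⟨hc, hs⟩ := cos_sin_int_mul_pi_div_two r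
  rw [castRingHom_mapMatrix_affineMatrix]
  ext i j
  fin_cases i <;> fin_cases j <;> simp [R2, R2Int, hc, hs]

theorem R3_eq_affineMatrix (m : Fin 2) (r : ℤ) :
    R3 m r = (Int.castRingHom ℝ).mapMatrix (affineMatrix (R3Int m r) 0) := by
  obtain ⟨hc, hs⟩ := cos_sin_int_mul_pi_div_two r
  rw [castRingHom_mapMatrix_affineMatrix]
  ext i j
  fin_cases i <;> fin_cases j <;> simp [R3, R3Int, hc, hs]

theorem T_eq_affineMatrix (t : ℤ × ℤ × ℤ) :
    T t = (Int.castRingHom ℝ).mapMatrix (affineMatrix 1 ![t.1, t.2.1, t.2.2]) := by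
  rw [castRingHom_mapMatrix_affineMatrix]
  ext i j
  fin_cases i <;> fin_cases j <;> simp [T]

theorem R1Int_mem_orthogonalGroup (m : Fin 2) (r : ℤ) : R1Int m r ∈ orthogonalGroup (Fin 3) ℤ := by
  rw [mem_orthogonalGroup_iff]
  ext i j
  fin_cases m <;> fin_cases i <;> fin_cases j <;>
    simp [R1Int, mul_apply, Fin.sum_univ_three] <;> linarith [icos_sq_add_isin_sq r]

theorem R2Int_mem_orthogonalGroup (m : Fin 2) (r : ℤ) : R2Int m r ∈ orthogonalGroup (Fin 3) ℤ := by
  rw [mem_orthogonalGroup_iff]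
  ext i j
  fin_cases m <;> fin_cases i <;> fin_cases j <;>
    simp [R2Int, mul_apply, Fin.sum_univ_three] <;> linarith [icos_sq_add_isin_sq r]

theorem R3Int_mem_orthogonalGroup (m : Fin 2) (r : ℤ) : R3Int m r ∈ orthogonalGroup (Fin 3) ℤ := by
  rw [mem_orthogonalGroup_iff]
  ext i j
  fin_cases m <;> fin_cases i <;> fin_cases j <;>
    simp [R3Int, mul_apply, Fin.sum_univ_three] <;> linarith [icos_sq_add_isin_sq r]

theorem exists_R1Int_mul_R2Int_col_one {u : Fin 3 → ℤ} (hu : u ⬝ᵥ u = 1) :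
    ∃ r₁ r₂ : ℤ, (R1Int 0 r₁ * R2Int 0 r₂).col 1 = u := by
  obtain ⟨x, y, z, rfl⟩ : ∃ x y z, u = ![x, y, z] :=
    ⟨u 0, u 1, u 2, by ext i; fin_cases i <;> rfl⟩
  simp only [dotProduct, Fin.sum_univ_three, Fin.isValue, cons_val_zero, cons_val_one,
    cons_val] at hu
  have hx : -1 ≤ x ∧ x ≤ 1 := by constructor <;> nlinarith [sq_nonneg y, sq_nonneg z]
  have hy : -1 ≤ y ∧ y ≤ 1 := by constructor <;> nlinarith [sq_nonneg x, sq_nonneg z]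
  have hz : -1 ≤ z ∧ z ≤ 1 := by constructor <;> nlinarith [sq_nonneg x, sq_nonneg y]
  obtain ⟨hx₁, hx₂⟩ := hx
  obtain ⟨hy₁, hy₂⟩ := hy
  obtain ⟨hz₁, hz₂⟩ := hz
  interval_cases x <;> interval_cases y <;> interval_cases z <;> norm_num at hu
  exacts [⟨1, 0, by decide⟩, ⟨2, 0, by decide⟩, ⟨0, 3, by decide⟩, ⟨0, 1, by decide⟩,
    ⟨0, 0, by decide⟩, ⟨3, 0, by decide⟩]

theorem exists_eq_R3Int {P : Matrix (Fin 3) (Fin 3) ℤ} (hP : P ∈ orthogonalGroup (Fin 3) ℤ)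
    (hfix : P.col 1 = Pi.single 1 1) : ∃ m r, P = R3Int m r := by
  have h01 : P 0 1 = 0 := congrFun hfix 0
  have h11 : P 1 1 = 1 := congrFun hfix 1
  have h21 : P 2 1 = 0 := congrFun hfix 2
  have hrow i j := congrFun₂ ((mem_orthogonalGroup_iff _ _).mp hP) i j
  have hcol i j := congrFun₂ ((mem_orthogonalGroup_iff' _ _).mp hP) i j
  simp only [mul_apply, transpose_apply, Fin.sum_univ_three] at hrow hcol
  have r00 := hrow 0 0
  have r11 := hrow 1 1
  have c00 := hcol 0 0
  have c22 := hcol 2 2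
  have c02 := hcol 0 2
  simp only [h01, h11, mul_zero, mul_one, add_zero, one_apply_eq, ne_eq, Fin.reduceEq,
    not_false_eq_true, one_apply_ne] at r00 r11 c00 c22 c02
  have h10 : P 1 0 = 0 := by nlinarith [sq_nonneg (P 1 0), sq_nonneg (P 1 2)]
  have h12 : P 1 2 = 0 := by nlinarith [sq_nonneg (P 1 0), sq_nonneg (P 1 2)]
  simp only [h10, h12, mul_zero, add_zero] at c00 c22 c02
  obtain ⟨r, hc, hs⟩ := exists_icos_isin_eq (c := P 0 0) (s := P 0 2) (by linear_combination r00)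
  -- the sign is the determinant of the block on the `(e₃, e₁)`-plane, a unit by Lagrange's
  -- identity `(ad - bc)² = (a² + c²)(b² + d²) - (ab + cd)²`
  obtain ⟨m, hm⟩ := exists_neg_one_pow_eq (e := P 0 0 * P 2 2 - P 0 2 * P 2 0) (by
    linear_combination (P 0 2 * P 0 2 + P 2 2 * P 2 2) * c00 + c22
      - (P 0 0 * P 0 2 + P 2 0 * P 2 2) * c02)
  refine ⟨m, r, ?_⟩
  rw [R3Int, hc, hs, hm]
  ext i j
  fin_cases i <;> fin_cases j <;> simp [h01, h10, h11, h12, h21]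
  · linear_combination (-P 2 0) * c22 + P 2 2 * c02
  · linear_combination (-P 2 2) * c00 + P 2 0 * c02

theorem exists_eq_R1Int_mul_R2Int_mul_R3Int {Q : Matrix (Fin 3) (Fin 3) ℤ}
    (hQ : Q ∈ orthogonalGroup (Fin 3) ℤ) :
    ∃ (m : Fin 2 × Fin 2 × Fin 2) (r : ℤ × ℤ × ℤ),
      Q = R1Int m.1 r.1 * R2Int m.2.1 r.2.1 * R3Int m.2.2 r.2.2 := by
  have hu : Q.col 1 ⬝ᵥ Q.col 1 = 1 := by
    simpa [mul_apply, dotProduct] using congrFun₂ ((mem_orthogonalGroup_iff' _ _).mp hQ) 1 1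
  obtain ⟨r₁, r₂, hcol⟩ := exists_R1Int_mul_R2Int_col_one hu
  set M := R1Int 0 r₁ * R2Int 0 r₂
  have hM : M ∈ orthogonalGroup (Fin 3) ℤ := mul_mem (R1Int_mem_orthogonalGroup _ _) (R2Int_mem_orthogonalGroup _ _)
  have hfix : (Mᵀ * Q).col 1 = Pi.single 1 1 := by
    rw [col_mul_eq_mulVec, ← hcol, ← col_mul_eq_mulVec, (mem_orthogonalGroup_iff' _ _).mp hM,
      ← mulVec_single_one, one_mulVec]
  obtain ⟨m₃, r₃, hP⟩ := exists_eq_R3Int (mul_mem (transpose_mem_orthogonalGroup hM) hQ) hfix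
  refine ⟨(0, 0, m₃), (r₁, r₂, r₃), ?_⟩
  calc Q = M * (Mᵀ * Q) := by
        rw [← Matrix.mul_assoc, (mem_orthogonalGroup_iff _ _).mp hM, Matrix.one_mul]
    _ = _ := by rw [hP]

theorem p4m_eq_image :
    p4m = (Int.castRingHom ℝ).mapMatrix '' affineOrthogonalGroup 3 ℤ := by
  ext A
  constructor
  · rintro ⟨m, r, t, rfl⟩
    rw [g, R1_eq_affineMatrix, R2_eq_affineMatrix, R3_eq_affineMatrix, T_eq_affineMatrix, ← map_mul, ← map_mul, ← map_mul]
    exact ⟨_, mul_mem (mul_mem (mul_mem (affineMatrix_mem (R1Int_mem_orthogonalGroup ..) _)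
      (affineMatrix_mem (R2Int_mem_orthogonalGroup ..) _)) (affineMatrix_mem (R3Int_mem_orthogonalGroup ..) _))
      (affineMatrix_mem (one_mem _) _), rfl⟩
  · rintro ⟨_, ⟨Q, hQ, v, rfl⟩, rfl⟩
    obtain ⟨m, r, hQr⟩ := exists_eq_R1Int_mul_R2Int_mul_R3Int hQ
    set w := Qᵀ *ᵥ v with hw_def
    refine ⟨m, r, (w 0, w 1, w 2), ?_⟩
    have hw : ![w 0, w 1, w 2] = w := by ext i; fin_cases i <;> rfl
    rw [affineMatrix_eq_mul_translation hQ, ← hw_def, hQr, g, R1_eq_affineMatrix, R2_eq_affineMatrix, R3_eq_affineMatrix, T_eq_affineMatrix, hw]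
    simp only [← map_mul, affineMatrix_mul, mulVec_zero, add_zero]

/-- The set `p4m` is a subgroup of `GL₄(ℝ)`: it contains the identity matrix, is closed
under matrix multiplication, and every element is invertible with inverse again in `p4m`;
thus `p4m` is a symmetry group under matrix multiplication. -/
theorem p4m_is_subgroup :
    (1 : Matrix (Fin 4) (Fin 4) ℝ) ∈ p4m ∧
    (∀ A B : Matrix (Fin 4) (Fin 4) ℝ, A ∈ p4m → B ∈ p4m → A * B ∈ p4m) ∧
    (∀ A : Matrix (Fin 4) (Fin 4) ℝ, A ∈ p4m → IsUnit A ∧ A⁻¹ ∈ p4m) := by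
  rw [p4m_eq_image]
  refine ⟨⟨1, one_mem _, map_one _⟩, ?_, ?_⟩
  · rintro _ _ ⟨A, hA, rfl⟩ ⟨B, hB, rfl⟩
    exact ⟨A * B, mul_mem hA hB, map_mul _ _ _⟩
  · rintro _ ⟨A, hA, rfl⟩
    obtain ⟨B, hB, hAB⟩ := exists_mul_eq_one_of_mem_affineOrthogonalGroup hA
    have h : (Int.castRingHom ℝ).mapMatrix A * (Int.castRingHom ℝ).mapMatrix B = 1 := by
      rw [← map_mul, hAB, map_one]
    exact ⟨(isUnit_iff_isUnit_det _).mpr (isUnit_det_of_right_inverse h),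
      inv_eq_right_inv h ▸ ⟨B, hB, rfl⟩⟩
end

section
/- RBF interpolation with the Gaussian kernel is uniquely solvable for any choice of data locations: for every σ > 0, every choice of pairwise distinct points v₁, …, v_N ∈ ℝ^d, and every vector of target values (y₁, …, y_N) ∈ ℝ^N, there exist unique weights (w₁, …, w_N) ∈ ℝ^N such that Σ_{j=1}^{N} w_j · exp(−‖v_i − v_j‖²/(2σ²)) = y_i for every i = 1, …, N. -/
/-!
Writing `exp (-‖x - y‖² / 2σ²) = D x * D y * exp (⟪x, y⟫ / σ²)` with `D x > 0`, it suffices to show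
that the exponential kernel `exp (c ⟪x, y⟫)`, `c > 0`, is strictly positive definite on distinct
points. Expanding `exp` and writing `⟪x, y⟫ ^ n` as a sum over words `f : Fin n → ι` of products of
coordinates, the quadratic form becomes `∑ₙ cⁿ / n! ∑_f (∑ᵢ uᵢ ∏ₘ vᵢ (f m))²`. If it vanishes, `u`
annihilates every monomial evaluated at the points, hence every polynomial; a product of affine
functions vanishing at all points but one then forces `u = 0`.
-/

open Finset Matrix Real

section PointEvaluations

variable {α ι R : Type*} [Fintype α] [CommRing R]

theorem sum_mul_eval_eq_zero_of_sum_mul_prod_eq_zero {v : α → ι → R} {u : α → R}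
    (H : ∀ (n : ℕ) (f : Fin n → ι), ∑ i, u i * ∏ m, v i (f m) = 0)
    (p : MvPolynomial ι R) : ∑ i, u i * MvPolynomial.eval (v i) p = 0 := by
  suffices ∀ (n : ℕ) (f : Fin n → ι),
      ∑ i, u i * (∏ m, v i (f m)) * MvPolynomial.eval (v i) p = 0 by
    simpa using this 0 Fin.elim0
  induction p using MvPolynomial.induction_on with
  | C a => intro n f; simp [← sum_mul, H]
  | add p q hp hq => intro n f; simp [mul_add, sum_add_distrib, hp, hq]
  | mul_X p k hp =>
    intro n f
    simpa [Fin.prod_univ_succ, mul_assoc, mul_left_comm, mul_comm] using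
      hp (n + 1) (Fin.cons k f)

theorem eq_zero_of_forall_sum_mul_eval_eq_zero [IsDomain R] {v : α → ι → R}
    (hv : Function.Injective v) {u : α → R}
    (H : ∀ p : MvPolynomial ι R, ∑ i, u i * MvPolynomial.eval (v i) p = 0) : u = 0 := by
  classical
  funext i₀
  have hsep (j : {j // j ≠ i₀}) : ∃ k, v i₀ k ≠ v j k :=
    Function.ne_iff.1 (hv.ne (Ne.symm j.2))
  choose k hk using hsep
  set p : MvPolynomial ι R := ∏ j, (MvPolynomial.X (k j) - MvPolynomial.C (v j (k j)))
  have heval (i : α) : MvPolynomial.eval (v i) p = ∏ j, (v i (k j) - v j (k j)) := by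
    simp [p]
  have hsum := H p
  rw [sum_eq_single i₀ (fun i _ hi => by
      rw [heval, prod_eq_zero (mem_univ ⟨i, hi⟩) (sub_self _), mul_zero])
    (fun h => absurd (mem_univ i₀) h), heval] at hsum
  exact (mul_eq_zero.1 hsum).resolve_right
    (prod_ne_zero_iff.2 fun j _ => sub_ne_zero.2 (hk j))

end PointEvaluations

section ExponentialKernel

variable {α ι : Type*} [Fintype α] [Fintype ι]

theorem dotProduct_pow_eq_sum_prod_mul_prod {R : Type*} [CommSemiring R] (x y : ι → R)
    (n : ℕ) : (x ⬝ᵥ y) ^ n = ∑ f : Fin n → ι, (∏ m, x (f m)) * ∏ m, y (f m) := by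
  classical
  rw [← Fin.prod_const, dotProduct, Fintype.prod_sum]
  simp_rw [prod_mul_distrib]

theorem sum_sum_mul_mul_dotProduct_pow {R : Type*} [CommSemiring R] (v : α → ι → R)
    (u : α → R) (n : ℕ) :
    ∑ i, ∑ j, u i * u j * (v i ⬝ᵥ v j) ^ n =
      ∑ f : Fin n → ι, (∑ i, u i * ∏ m, v i (f m)) ^ 2 := by
  simp_rw [dotProduct_pow_eq_sum_prod_mul_prod, sq, sum_mul_sum, mul_sum]
  calc _ = ∑ i, ∑ f : Fin n → ι, ∑ j, u i * u j * ((∏ m, v i (f m)) * ∏ m, v j (f m)) :=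
        Finset.sum_congr rfl fun i _ => Finset.sum_comm
    _ = _ := Finset.sum_comm.trans <| Finset.sum_congr rfl fun f _ =>
        Finset.sum_congr rfl fun i _ => Finset.sum_congr rfl fun j _ => by ring

theorem hasSum_sum_sum_mul_mul_exp_dotProduct (c : ℝ) (v : α → ι → ℝ) (u : α → ℝ) :
    HasSum (fun n => c ^ n / n.factorial * ∑ f : Fin n → ι, (∑ i, u i * ∏ m, v i (f m)) ^ 2)
      (∑ i, ∑ j, u i * u j * exp (c * (v i ⬝ᵥ v j))) := by
  have hexp (i j : α) : HasSum (fun n => u i * u j * ((c * (v i ⬝ᵥ v j)) ^ n / n.factorial))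
      (u i * u j * exp (c * (v i ⬝ᵥ v j))) := by
    rw [exp_eq_exp_ℝ]
    exact (NormedSpace.expSeries_div_hasSum_exp (c * (v i ⬝ᵥ v j))).mul_left (u i * u j)
  convert hasSum_sum fun i _ => hasSum_sum fun j _ => hexp i j using 1
  funext n
  rw [← sum_sum_mul_mul_dotProduct_pow, mul_sum]
  refine Finset.sum_congr rfl fun i _ => ?_
  rw [mul_sum]
  exact Finset.sum_congr rfl fun j _ => by ring

theorem sum_sum_mul_mul_exp_dotProduct_nonneg {c : ℝ} (hc : 0 ≤ c) (v : α → ι → ℝ)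
    (u : α → ℝ) : 0 ≤ ∑ i, ∑ j, u i * u j * exp (c * (v i ⬝ᵥ v j)) :=
  (hasSum_sum_sum_mul_mul_exp_dotProduct c v u).nonneg fun _ => by positivity

theorem sum_mul_prod_eq_zero_of_sum_sum_mul_mul_exp_dotProduct_eq_zero {c : ℝ} (hc : 0 < c)
    {v : α → ι → ℝ} {u : α → ℝ} (h : ∑ i, ∑ j, u i * u j * exp (c * (v i ⬝ᵥ v j)) = 0)
    (n : ℕ) (f : Fin n → ι) : ∑ i, u i * ∏ m, v i (f m) = 0 := by
  have hterms := (hasSum_zero_iff_of_nonneg fun n => by positivity).1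
    (h ▸ hasSum_sum_sum_mul_mul_exp_dotProduct c v u)
  have hsq : ∑ g : Fin n → ι, (∑ i, u i * ∏ m, v i (g m)) ^ 2 = 0 :=
    (mul_eq_zero.1 (congrFun hterms n)).resolve_left (by positivity)
  exact pow_eq_zero_iff two_ne_zero |>.1 <|
    (sum_eq_zero_iff_of_nonneg fun g _ => sq_nonneg _).1 hsq f (mem_univ f)

theorem sum_sum_mul_mul_exp_dotProduct_pos {c : ℝ} (hc : 0 < c) {v : α → ι → ℝ}
    (hv : Function.Injective v) {u : α → ℝ} (hu : u ≠ 0) :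
    0 < ∑ i, ∑ j, u i * u j * exp (c * (v i ⬝ᵥ v j)) := by
  refine (sum_sum_mul_mul_exp_dotProduct_nonneg hc.le v u).lt_of_ne' fun h => hu ?_
  exact eq_zero_of_forall_sum_mul_eval_eq_zero hv <|
    sum_mul_eval_eq_zero_of_sum_mul_prod_eq_zero <|
      sum_mul_prod_eq_zero_of_sum_sum_mul_mul_exp_dotProduct_eq_zero hc h

end ExponentialKernel

section GaussianKernel

variable {E : Type*} [NormedAddCommGroup E] [InnerProductSpace ℝ E]

theorem exp_neg_norm_sub_sq_div (σ : ℝ) (x y : E) :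
    exp (-‖x - y‖ ^ 2 / (2 * σ ^ 2)) =
      exp (-‖x‖ ^ 2 / (2 * σ ^ 2)) * exp (-‖y‖ ^ 2 / (2 * σ ^ 2)) *
        exp ((σ ^ 2)⁻¹ * inner ℝ x y) := by
  rw [← exp_add, ← exp_add, norm_sub_sq_real]
  ring_nf

noncomputable def gaussianKernelMatrix {α : Type*} (σ : ℝ) (v : α → E) : Matrix α α ℝ :=
  of fun i j => exp (-‖v i - v j‖ ^ 2 / (2 * σ ^ 2))

theorem posDef_gaussianKernelMatrix {α ι : Type*} [Fintype α] [Fintype ι] {σ : ℝ}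
    (hσ : σ ≠ 0) {v : α → EuclideanSpace ℝ ι} (hv : Function.Injective v) :
    (gaussianKernelMatrix σ v).PosDef := by
  have hsymm : (gaussianKernelMatrix σ v).IsHermitian :=
    IsHermitian.ext fun i j => by simp [gaussianKernelMatrix, norm_sub_rev]
  refine .of_dotProduct_mulVec_pos hsymm fun u hu => ?_
  set D : α → ℝ := fun i => exp (-‖v i‖ ^ 2 / (2 * σ ^ 2))
  have hinner (i j : α) : inner ℝ (v i) (v j) = (v i).ofLp ⬝ᵥ (v j).ofLp := by
    rw [EuclideanSpace.inner_eq_star_dotProduct, star_trivial, dotProduct_comm]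
  have hquad : star u ⬝ᵥ (gaussianKernelMatrix σ v *ᵥ u) =
      ∑ i, ∑ j, (u i * D i) * (u j * D j) * exp ((σ ^ 2)⁻¹ * ((v i).ofLp ⬝ᵥ (v j).ofLp)) := by
    simp only [dotProduct, mulVec, gaussianKernelMatrix, of_apply, exp_neg_norm_sub_sq_div σ,
      hinner, mul_sum, star_trivial]
    exact Finset.sum_congr rfl fun i _ => Finset.sum_congr rfl fun j _ => by ring
  rw [hquad]
  refine sum_sum_mul_mul_exp_dotProduct_pos (by positivity)
    ((WithLp.ofLp_injective 2).comp hv) fun h => hu (funext fun i => ?_)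
  simpa [D, (exp_pos _).ne'] using congrFun h i

end GaussianKernel

/-- Gaussian RBF interpolation is uniquely solvable for any choice of pairwise
distinct data locations: for every `σ > 0`, pairwise distinct `v₁, …, v_N ∈ ℝ^d`
and target values `y ∈ ℝ^N`, there exist unique weights `w ∈ ℝ^N` with
`Σ_j w_j · exp(−‖v_i − v_j‖²/(2σ²)) = y_i` for all `i`. -/
theorem gaussian_rbf_interpolation_unique (σ : ℝ) (hσ : 0 < σ) (d N : ℕ)
    (v : Fin N → EuclideanSpace ℝ (Fin d)) (hv : Function.Injective v)
    (y : Fin N → ℝ) :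
    ∃! w : Fin N → ℝ,
      ∀ i : Fin N, ∑ j, w j * Real.exp (-‖v i - v j‖ ^ 2 / (2 * σ ^ 2)) = y i := by
  have hunit := (posDef_gaussianKernelMatrix hσ.ne' hv).isUnit
  have hbij : Function.Bijective (gaussianKernelMatrix σ v).mulVec :=
    ⟨mulVec_injective_iff_isUnit.2 hunit, mulVec_surjective_iff_isUnit.2 hunit⟩
  simpa [funext_iff, mulVec, dotProduct, gaussianKernelMatrix, mul_comm] using
    hbij.existsUnique y
end

section
/- For every σ > 0, every d ≥ 1, every N ≥ 1, and every choice of pairwise distinct points v₁, …, v_N ∈ ℝ^d, the N×N matrix B with entries B_{ij} = 1/(1 + σ²‖v_i − v_j‖²) is symmetric and positive definite: B_{ij} = B_{ji} for all i, j, and wᵀ B w > 0 for every nonzero w ∈ ℝ^N. -/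
/-!
Since `1 / b = ∫₀^∞ e^{-b s} ds`, the quadratic form of the inverse quadratic matrix is an integral
over `s > 0` of `e^{-s}` times quadratic forms of Gaussian matrices `[e^{-σ² s ‖v_i - v_j‖²}]`, so
it suffices that Gaussian matrices of distinct points are positive definite. A Gaussian matrix is
`D E D` with `D` diagonal invertible and `E = [exp (c ⟪x_i, x_j⟫)]`. The exponential series makes
`E` a nonnegative combination of Hadamard powers of a Gram matrix, positive semidefinite by Schur's
product theorem. If `wᵀ E w = 0`, then `w` (extended by `0`) lies in the kernel of the kernel
matrix of the family with an arbitrary extra point `y`, so `∑ w_i exp (c ⟪y, x_i⟫) = 0` for all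
`y`; Dedekind's independence of the distinct characters `y ↦ exp (c ⟪y, x_i⟫)` forces `w = 0`.
-/

open Real MeasureTheory Set Matrix Function
open scoped RealInnerProductSpace Nat

variable {E ι : Type*} [NormedAddCommGroup E] [InnerProductSpace ℝ E]

noncomputable def gaussianMatrix (t : ℝ) (x : ι → E) : Matrix ι ι ℝ :=
  of fun i j => exp (-(t * ‖x i - x j‖ ^ 2))

noncomputable def inverseQuadraticMatrix (σ : ℝ) (x : ι → E) : Matrix ι ι ℝ :=
  of fun i j => 1 / (1 + σ ^ 2 * ‖x i - x j‖ ^ 2)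

theorem star_dotProduct_mulVec_eq_sum_sum [Fintype ι] (A : Matrix ι ι ℝ) (w : ι → ℝ) :
    star w ⬝ᵥ (A *ᵥ w) = ∑ i, ∑ j, w i * A i j * w j := by
  simp [dotProduct, mulVec, Finset.mul_sum, mul_assoc]

theorem posSemidef_inner_pow [Finite ι] (x : ι → E) (m : ℕ) :
    (of fun i j => ⟪x i, x j⟫ ^ m).PosSemidef := by
  induction m with
  | zero => simpa [vecMulVec] using posSemidef_vecMulVec_self_star (fun _ : ι => (1 : ℝ))
  | succ m ih =>
    have hpow : (of fun i j => ⟪x i, x j⟫ ^ (m + 1)) =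
        (of fun i j => ⟪x i, x j⟫ ^ m) ⊙ gram ℝ x := by
      ext i j
      simp [gram, pow_succ]
    rw [hpow]
    exact ih.hadamard (posSemidef_gram ℝ x)

theorem posSemidef_exp_inner [Fintype ι] {c : ℝ} (hc : 0 ≤ c) (x : ι → E) :
    (of fun i j => exp (c * ⟪x i, x j⟫)).PosSemidef := by
  refine .of_dotProduct_mulVec_nonneg ?_ fun w => ?_
  · ext i j
    simp [real_inner_comm]
  have hseries : HasSum (fun m => c ^ m / m ! * ∑ i, ∑ j, w i * ⟪x i, x j⟫ ^ m * w j)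
      (∑ i, ∑ j, w i * exp (c * ⟪x i, x j⟫) * w j) := by
    simp only [Finset.mul_sum]
    refine hasSum_sum fun i _ => hasSum_sum fun j _ => ?_
    have hexp := ((NormedSpace.expSeries_div_hasSum_exp (c * ⟪x i, x j⟫)).mul_left
      (w i)).mul_right (w j)
    rw [← exp_eq_exp_ℝ] at hexp
    have hterms : (fun m => c ^ m / m ! * (w i * ⟪x i, x j⟫ ^ m * w j)) =
        fun m => w i * ((c * ⟪x i, x j⟫) ^ m / m !) * w j := funext fun m => by ring
    rw [hterms]
    exact hexp
  have hterm (m : ℕ) := (posSemidef_inner_pow x m).dotProduct_mulVec_nonneg w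
  simp only [star_dotProduct_mulVec_eq_sum_sum, of_apply] at hterm ⊢
  exact hseries.nonneg fun m => mul_nonneg (by positivity) (hterm m)

theorem sum_kernel_mul_eq_zero_of_dotProduct_mulVec_eq_zero [Fintype ι] {X : Type*}
    {K : X → X → ℝ} (hK : ∀ z : Option ι → X, (of fun a b => K (z a) (z b)).PosSemidef)
    (x : ι → X) {w : ι → ℝ} (hw : star w ⬝ᵥ ((of fun i j => K (x i) (x j)) *ᵥ w) = 0)
    (y : X) : ∑ i, K y (x i) * w i = 0 := by
  set z : Option ι → X := fun a => a.elim y x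
  set w' : Option ι → ℝ := fun a => a.elim 0 w
  have hw' : star w' ⬝ᵥ ((of fun a b => K (z a) (z b)) *ᵥ w') = 0 := by
    rw [star_dotProduct_mulVec_eq_sum_sum] at hw ⊢
    simpa [Fintype.sum_option, z, w'] using hw
  have hkernel := congrFun (((hK z).dotProduct_mulVec_zero_iff w').mp hw') none
  simpa [mulVec, dotProduct, Fintype.sum_option, z, w'] using hkernel

theorem linearIndependent_exp_inner [Fintype ι] {c : ℝ} (hc : c ≠ 0) {x : ι → E}
    (hx : Injective x) : LinearIndependent ℝ fun i (y : E) => exp (c * ⟪y, x i⟫) := by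
  let χ : ι → Multiplicative E →* ℝ := fun i =>
    { toFun := fun y => exp (c * ⟪y.toAdd, x i⟫)
      map_one' := by simp
      map_mul' := fun y z => by simp [inner_add_left, mul_add, exp_add] }
  have hχ : Injective χ := by
    intro i j hij
    have h := congrArg (fun χ => χ (.ofAdd (x i - x j))) hij
    simp only [χ, MonoidHom.coe_mk, OneHom.coe_mk, toAdd_ofAdd, exp_eq_exp,
      mul_right_inj' hc] at h
    apply hx
    rw [← sub_eq_zero, ← inner_self_eq_zero (𝕜 := ℝ), inner_sub_right, h, sub_self]
  exact (linearIndependent_monoidHom (Multiplicative E) ℝ).comp χ hχ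

theorem posDef_exp_inner [Fintype ι] {c : ℝ} (hc : 0 < c) {x : ι → E} (hx : Injective x) :
    (of fun i j => exp (c * ⟪x i, x j⟫)).PosDef := by
  have hA := posSemidef_exp_inner hc.le x
  refine .of_dotProduct_mulVec_pos hA.isHermitian fun w hw =>
    (hA.dotProduct_mulVec_nonneg w).lt_of_ne' fun hzero => hw ?_
  refine funext <| Fintype.linearIndependent_iff.mp (linearIndependent_exp_inner hc.ne' hx) w
    (funext fun y => ?_)
  have hvanish := sum_kernel_mul_eq_zero_of_dotProduct_mulVec_eq_zero
    (K := fun y z => exp (c * ⟪y, z⟫)) (posSemidef_exp_inner hc.le) x hzero y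
  simpa [Finset.sum_apply, mul_comm] using hvanish

theorem posDef_gaussianMatrix [Fintype ι] {t : ℝ} (ht : 0 < t) {x : ι → E} (hx : Injective x) :
    (gaussianMatrix t x).PosDef := by
  classical
  set D : Matrix ι ι ℝ := diagonal fun i => exp (-(t * ‖x i‖ ^ 2))
  have hD : Injective D.mulVec := mulVec_injective_iff_isUnit.mpr <|
    isUnit_diagonal.mpr <| Pi.isUnit_iff.mpr fun i => (exp_pos _).ne'.isUnit
  have hfactor : gaussianMatrix t x = Dᴴ * (of fun i j => exp (2 * t * ⟪x i, x j⟫)) * D := by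
    ext i j
    simp only [gaussianMatrix, D, diagonal_conjTranspose, diagonal_mul, mul_diagonal, of_apply,
      star_trivial, norm_sub_sq_real, ← exp_add]
    ring_nf
  rw [hfactor]
  exact (posDef_exp_inner (by positivity) hx).conjTranspose_mul_mul_same hD

theorem integral_exp_neg_mul_Ioi {b : ℝ} (hb : 0 < b) : ∫ s in Ioi 0, exp (-b * s) = 1 / b := by
  rw [integral_exp_mul_Ioi (neg_lt_zero.mpr hb)]
  simp

theorem setIntegral_pos_of_forall_pos {X : Type*} [MeasurableSpace X] {μ : Measure X}
    {s : Set X} {f : X → ℝ} (hs : MeasurableSet s) (hμs : μ s ≠ 0) (hf : IntegrableOn f s μ)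
    (hpos : ∀ x ∈ s, 0 < f x) : 0 < ∫ x in s, f x ∂μ := by
  rw [setIntegral_pos_iff_support_of_nonneg_ae
    (ae_restrict_of_forall_mem hs fun x hx => (hpos x hx).le) hf,
    inter_eq_right.mpr (show s ⊆ support f from fun x hx => (hpos x hx).ne')]
  exact pos_iff_ne_zero.mpr hμs

theorem posDef_inverseQuadraticMatrix [Fintype ι] {σ : ℝ} (hσ : σ ≠ 0) {x : ι → E}
    (hx : Injective x) : (inverseQuadraticMatrix σ x).PosDef := by
  refine .of_dotProduct_mulVec_pos ?_ fun w hw => ?_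
  · ext i j
    simp [inverseQuadraticMatrix, norm_sub_rev]
  set b : ι → ι → ℝ := fun i j => 1 + σ ^ 2 * ‖x i - x j‖ ^ 2
  have hb (i j : ι) : 0 < b i j := by positivity
  have hint (i j : ι) : IntegrableOn (fun s => w i * exp (-b i j * s) * w j) (Ioi 0) :=
    ((exp_neg_integrableOn_Ioi 0 (hb i j)).const_mul (w i)).mul_const (w j)
  have hquad : star w ⬝ᵥ (inverseQuadraticMatrix σ x *ᵥ w) =
      ∫ s in Ioi 0, ∑ i, ∑ j, w i * exp (-b i j * s) * w j := by
    rw [integral_finsetSum _ fun i _ => integrable_finsetSum _ fun j _ => hint i j]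
    simp_rw [integral_finsetSum _ fun j _ => hint _ j, integral_mul_const, integral_const_mul,
      integral_exp_neg_mul_Ioi (hb _ _), star_dotProduct_mulVec_eq_sum_sum]
    rfl
  rw [hquad]
  refine setIntegral_pos_of_forall_pos measurableSet_Ioi (by simp)
    (integrable_finsetSum _ fun i _ => integrable_finsetSum _ fun j _ => hint i j)
    fun s (hs : 0 < s) => ?_
  have hgauss :=
    (posDef_gaussianMatrix (t := σ ^ 2 * s) (by positivity) hx).dotProduct_mulVec_pos hw
  calc 0 < exp (-s) * (star w ⬝ᵥ (gaussianMatrix (σ ^ 2 * s) x *ᵥ w)) := by positivity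
    _ = _ := by
      simp only [star_dotProduct_mulVec_eq_sum_sum, gaussianMatrix, of_apply, Finset.mul_sum, b]
      refine Finset.sum_congr rfl fun i _ => Finset.sum_congr rfl fun j _ => ?_
      rw [show -(1 + σ ^ 2 * ‖x i - x j‖ ^ 2) * s = -s + -(σ ^ 2 * s * ‖x i - x j‖ ^ 2) by ring,
        exp_add]
      ring

theorem inverse_quadratic_rbf_matrix_symm_posDef_general (σ : ℝ) (hσ : 0 < σ) (d N : ℕ)
    (v : Fin N → EuclideanSpace ℝ (Fin d)) (hv : Function.Injective v) :
    (∀ i j : Fin N,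
      1 / (1 + σ ^ 2 * ‖v i - v j‖ ^ 2) = 1 / (1 + σ ^ 2 * ‖v j - v i‖ ^ 2)) ∧
    (∀ w : Fin N → ℝ, w ≠ 0 →
      0 < ∑ i, ∑ j, w i * (1 / (1 + σ ^ 2 * ‖v i - v j‖ ^ 2)) * w j) := by
  refine ⟨fun i j => by rw [norm_sub_rev], fun w hw => ?_⟩
  simpa only [star_dotProduct_mulVec_eq_sum_sum, inverseQuadraticMatrix, of_apply] using
    (posDef_inverseQuadraticMatrix hσ.ne' hv).dotProduct_mulVec_pos hw

/-- For `σ > 0`, `d ≥ 1`, `N ≥ 1` and pairwise distinct points `v₁, …, v_N ∈ ℝ^d`,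
the inverse quadratic RBF interpolation matrix `B` with
`B_{ij} = 1/(1 + σ²‖v_i − v_j‖²)` is symmetric and positive definite:
`B_{ij} = B_{ji}` and `wᵀ B w > 0` for every nonzero `w ∈ ℝ^N`. -/
theorem inverse_quadratic_rbf_matrix_symm_posDef (σ : ℝ) (hσ : 0 < σ) (d N : ℕ)
    (hd : 1 ≤ d) (hN : 1 ≤ N)
    (v : Fin N → EuclideanSpace ℝ (Fin d)) (hv : Function.Injective v) :
    (∀ i j : Fin N,
      1 / (1 + σ ^ 2 * ‖v i - v j‖ ^ 2) = 1 / (1 + σ ^ 2 * ‖v j - v i‖ ^ 2)) ∧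
    (∀ w : Fin N → ℝ, w ≠ 0 →
      0 < ∑ i, ∑ j, w i * (1 / (1 + σ ^ 2 * ‖v i - v j‖ ^ 2)) * w j) :=
  inverse_quadratic_rbf_matrix_symm_posDef_general σ hσ d N v hv
end

section
/- (Mairhuber–Curtis) Let d ≥ 2, let Ω ⊆ ℝ^d be a set with nonempty interior, let n ≥ 2, and let u₁, …, u_n : ℝ^d → ℝ be continuous functions. Then there exist pairwise distinct points x₁, …, x_n ∈ Ω such that the n×n matrix M with entries M_{ij} = u_j(x_i) is singular, i.e., det M = 0. (Equivalently, for d ≥ 2 there is no Haar system of dimension n ≥ 2 of continuous functions on Ω.) -/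
open Real

set_option maxHeartbeats 1000000


/-- (Mairhuber–Curtis) For `d ≥ 2`, a set `Ω ⊆ ℝ^d` with nonempty interior, `n ≥ 2`,
and continuous functions `u₁, …, u_n : ℝ^d → ℝ`, there exist pairwise distinct points
`x₁, …, x_n ∈ Ω` such that the matrix `(u_j(x_i))_{i,j}` is singular. Equivalently,
for `d ≥ 2` there is no Haar system of dimension `n ≥ 2` of continuous functions
on `Ω`. -/
theorem mairhuber_curtis (d : ℕ) (hd : 2 ≤ d)
    (Ω : Set (EuclideanSpace ℝ (Fin d))) (hΩ : (interior Ω).Nonempty)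
    (n : ℕ) (hn : 2 ≤ n)
    (u : Fin n → EuclideanSpace ℝ (Fin d) → ℝ) (hu : ∀ j, Continuous (u j)) :
    ∃ x : Fin n → EuclideanSpace ℝ (Fin d),
      Function.Injective x ∧ (∀ i, x i ∈ Ω) ∧
      (Matrix.of fun i j : Fin n => u j (x i)).det = 0 := by
  haveI : NeZero n := ⟨by omega⟩
  obtain ⟨p₀, hp₀⟩ := hΩ
  obtain ⟨ε, hε, hball⟩ := Metric.isOpen_iff.mp isOpen_interior p₀ hp₀
  have hsub : Metric.ball p₀ ε ⊆ Ω := hball.trans interior_subset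
  set r : ℝ := ε / 2 with hr
  have hrpos : 0 < r := by positivity
  have h0d : (0 : ℕ) < d := by omega
  have h1d : (1 : ℕ) < d := by omega
  set i0 : Fin d := ⟨0, h0d⟩
  set i1 : Fin d := ⟨1, h1d⟩
  have hi01 : i0 ≠ i1 := by simp [i0, i1, Fin.ext_iff]
  set E0 : EuclideanSpace ℝ (Fin d) := EuclideanSpace.single i0 (1 : ℝ) with hE0
  set E1 : EuclideanSpace ℝ (Fin d) := EuclideanSpace.single i1 (1 : ℝ) with hE1
  -- the two moving points
  obtain ⟨X, hX⟩ : ∃ X : ℝ → EuclideanSpace ℝ (Fin d),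
      X = fun t => p₀ + ((r / 2 * Real.cos (π * t)) • E0 + (r / 2 * Real.sin (π * t)) • E1) :=
    ⟨_, rfl⟩
  obtain ⟨Y, hY⟩ : ∃ Y : ℝ → EuclideanSpace ℝ (Fin d),
      Y = fun t => p₀ - ((r / 2 * Real.cos (π * t)) • E0 + (r / 2 * Real.sin (π * t)) • E1) :=
    ⟨_, rfl⟩
  obtain ⟨z, hz⟩ : ∃ z : Fin n → EuclideanSpace ℝ (Fin d),
      z = fun i : Fin n => p₀ + (r * ((i : ℕ) : ℝ) / (4 * n)) • E0 := ⟨_, rfl⟩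
  obtain ⟨pts, hpts⟩ : ∃ pts : ℝ → Fin n → EuclideanSpace ℝ (Fin d),
      pts = fun t i => if i = 0 then X t else if i = 1 then Y t else z i := ⟨_, rfl⟩
  -- norm bound
  have hnorm : ∀ (c₀ c₁ : ℝ), ‖c₀ • E0 + c₁ • E1‖ ≤ |c₀| + |c₁| := by
    intro c₀ c₁
    calc ‖c₀ • E0 + c₁ • E1‖ ≤ ‖c₀ • E0‖ + ‖c₁ • E1‖ := norm_add_le _ _
    _ = |c₀| + |c₁| := by
        simp [hE0, hE1, norm_smul, EuclideanSpace.norm_single]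
  -- membership of all points in the ball
  have hmemX : ∀ t, X t ∈ Metric.ball p₀ ε := by
    intro t
    have h1 : |r / 2 * Real.cos (π * t)| ≤ r / 2 := by
      rw [abs_mul, abs_of_pos (by positivity : (0:ℝ) < r / 2)]
      nlinarith [abs_cos_le_one (π * t), abs_nonneg (Real.cos (π * t))]
    have h2 : |r / 2 * Real.sin (π * t)| ≤ r / 2 := by
      rw [abs_mul, abs_of_pos (by positivity : (0:ℝ) < r / 2)]
      nlinarith [abs_sin_le_one (π * t), abs_nonneg (Real.sin (π * t))]
    simp only [Metric.mem_ball, hX, dist_eq_norm]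
    have : ‖p₀ + ((r / 2 * Real.cos (π * t)) • E0 + (r / 2 * Real.sin (π * t)) • E1) - p₀‖
        ≤ r / 2 + r / 2 := by
      rw [add_sub_cancel_left]
      linarith [hnorm (r / 2 * Real.cos (π * t)) (r / 2 * Real.sin (π * t))]
    calc _ ≤ r / 2 + r / 2 := this
    _ < ε := by rw [hr]; linarith
  have hmemY : ∀ t, Y t ∈ Metric.ball p₀ ε := by
    intro t
    have hx := hmemX t
    simp only [Metric.mem_ball, hX, hY, dist_eq_norm] at hx ⊢
    rw [sub_sub_cancel_left, norm_neg]
    rw [add_sub_cancel_left] at hx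
    exact hx
  have hmemz : ∀ i : Fin n, z i ∈ Metric.ball p₀ ε := by
    intro i
    simp only [Metric.mem_ball, hz, dist_eq_norm, add_sub_cancel_left]
    rw [norm_smul, EuclideanSpace.norm_single]
    have hin : (i : ℝ) < n := by exact_mod_cast i.isLt
    have hn0 : (0:ℝ) < n := by positivity
    have : |r * (i : ℕ) / (4 * n)| ≤ r / 4 := by
      rw [abs_of_nonneg (by positivity)]
      rw [div_le_div_iff₀ (by positivity) (by norm_num)]
      nlinarith [Nat.cast_nonneg (α := ℝ) (i : ℕ)]
    simp only [norm_one, mul_one]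
    calc |r * (i : ℕ) / (4 * n)| ≤ r / 4 := this
    _ < ε := by rw [hr]; linarith
  have h01 : (0 : Fin n) ≠ 1 := by
    apply Fin.ne_of_val_ne
    simp [Fin.val_one', Nat.mod_eq_of_lt (by omega : 1 < n)]
  have hmem : ∀ t i, pts t i ∈ Ω := by
    intro t i
    apply hsub
    by_cases h0 : i = 0
    · simpa [hpts, h0] using hmemX t
    · by_cases h1 : i = 1
      · simpa [hpts, h0, h1, h01, h01.symm] using hmemY t
      · simpa [hpts, h0, h1, h01, h01.symm] using hmemz i
  -- coordinate formulas
  have hXi0 : ∀ t, (X t) i0 = p₀ i0 + r / 2 * Real.cos (π * t) := by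
    intro t
    simp [hX, PiLp.add_apply, PiLp.smul_apply, hE0, hE1, EuclideanSpace.single_apply,
      hi01, hi01.symm]
  have hXi1 : ∀ t, (X t) i1 = p₀ i1 + r / 2 * Real.sin (π * t) := by
    intro t
    simp [hX, PiLp.add_apply, PiLp.smul_apply, hE0, hE1, EuclideanSpace.single_apply,
      hi01, hi01.symm]
  have hYi0 : ∀ t, (Y t) i0 = p₀ i0 - r / 2 * Real.cos (π * t) := by
    intro t
    simp [hY, PiLp.sub_apply, PiLp.add_apply, PiLp.smul_apply, hE0, hE1,
      EuclideanSpace.single_apply, hi01, hi01.symm]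
  have hYi1 : ∀ t, (Y t) i1 = p₀ i1 - r / 2 * Real.sin (π * t) := by
    intro t
    simp [hY, PiLp.sub_apply, PiLp.add_apply, PiLp.smul_apply, hE0, hE1,
      EuclideanSpace.single_apply, hi01, hi01.symm]
  have hzi0 : ∀ i : Fin n, (z i) i0 = p₀ i0 + r * (i : ℕ) / (4 * n) := by
    intro i
    simp [hz, PiLp.add_apply, PiLp.smul_apply, hE0, EuclideanSpace.single_apply]
  have hzi1 : ∀ i : Fin n, (z i) i1 = p₀ i1 := by
    intro i
    simp [hz, PiLp.add_apply, PiLp.smul_apply, hE0, EuclideanSpace.single_apply, hi01.symm]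
  have hn0 : (0:ℝ) < (n:ℝ) := by positivity
  -- bounds on z coefficients
  have hzbound : ∀ i : Fin n, i ≠ 0 → i ≠ 1 → 0 < r * (i : ℕ) / (4 * n) ∧
      r * (i : ℕ) / (4 * n) < r / 2 := by
    intro i h0 h1
    have hv0 : (i : ℕ) ≠ 0 := by
      intro hv; exact h0 (by ext; simp [hv])
    have hv1 : (i : ℕ) ≠ 1 := by
      intro hv
      apply h1
      ext
      simp [hv, Fin.val_one', Nat.mod_eq_of_lt (by omega : 1 < n)]
    have h2i : 2 ≤ (i : ℕ) := by omega
    have hin : ((i:ℕ) : ℝ) < (n : ℝ) := by exact_mod_cast i.isLt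
    have h2i' : (0:ℝ) < ((i:ℕ) : ℝ) := by exact_mod_cast Nat.pos_of_ne_zero hv0
    refine ⟨by positivity, ?_⟩
    rw [div_lt_div_iff₀ (by positivity) (by norm_num)]
    nlinarith [mul_lt_mul_of_pos_left hin hrpos, mul_pos hrpos hn0]
  -- pairwise distinctness, for every t
  have hXneY : ∀ t, X t ≠ Y t := by
    intro t h
    have h0 := congrArg (fun v => v i0) h
    have h1 := congrArg (fun v => v i1) h
    simp only at h0 h1
    rw [hXi0, hYi0] at h0
    rw [hXi1, hYi1] at h1
    have hr2 : (r / 2 : ℝ) ≠ 0 := by positivity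
    have hc : Real.cos (π * t) = 0 := by
      rcases mul_eq_zero.mp (show r / 2 * Real.cos (π * t) = 0 by linarith) with h | h
      · exact absurd h hr2
      · exact h
    have hs : Real.sin (π * t) = 0 := by
      rcases mul_eq_zero.mp (show r / 2 * Real.sin (π * t) = 0 by linarith) with h | h
      · exact absurd h hr2
      · exact h
    nlinarith [Real.sin_sq_add_cos_sq (π * t)]
  have hXnez : ∀ t, ∀ i : Fin n, i ≠ 0 → i ≠ 1 → X t ≠ z i := by
    intro t i h0 h1 h
    obtain ⟨hb1, hb2⟩ := hzbound i h0 h1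
    have hc0 := congrArg (fun v => v i0) h
    have hc1 := congrArg (fun v => v i1) h
    simp only at hc0 hc1
    rw [hXi0, hzi0] at hc0
    rw [hXi1, hzi1] at hc1
    have hr2 : (r / 2 : ℝ) ≠ 0 := by positivity
    have hs : Real.sin (π * t) = 0 := by
      rcases mul_eq_zero.mp (show r / 2 * Real.sin (π * t) = 0 by linarith) with h | h
      · exact absurd h hr2
      · exact h
    have hpyth := Real.sin_sq_add_cos_sq (π * t)
    have hcos2 : Real.cos (π * t) ^ 2 = 1 := by nlinarith
    have hceq : r / 2 * Real.cos (π * t) = r * (i : ℕ) / (4 * n) := by linarith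
    have hsq : (r * (i : ℕ) / (4 * n)) * (r * (i : ℕ) / (4 * n)) = (r / 2) * (r / 2) := by
      calc (r * (i : ℕ) / (4 * n)) * (r * (i : ℕ) / (4 * n))
          = (r / 2 * Real.cos (π * t)) * (r / 2 * Real.cos (π * t)) := by rw [hceq]
        _ = (r / 2) * (r / 2) * (Real.cos (π * t) ^ 2) := by ring
        _ = (r / 2) * (r / 2) := by rw [hcos2]; ring
    linarith [mul_lt_mul'' hb2 hb2 hb1.le hb1.le]
  have hYnez : ∀ t, ∀ i : Fin n, i ≠ 0 → i ≠ 1 → Y t ≠ z i := by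
    intro t i h0 h1 h
    obtain ⟨hb1, hb2⟩ := hzbound i h0 h1
    have hc0 := congrArg (fun v => v i0) h
    have hc1 := congrArg (fun v => v i1) h
    simp only at hc0 hc1
    rw [hYi0, hzi0] at hc0
    rw [hYi1, hzi1] at hc1
    have hr2 : (r / 2 : ℝ) ≠ 0 := by positivity
    have hs : Real.sin (π * t) = 0 := by
      rcases mul_eq_zero.mp (show r / 2 * Real.sin (π * t) = 0 by linarith) with h | h
      · exact absurd h hr2
      · exact h
    have hpyth := Real.sin_sq_add_cos_sq (π * t)
    have hcos2 : Real.cos (π * t) ^ 2 = 1 := by nlinarith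
    have hceq : r / 2 * Real.cos (π * t) = -(r * (i : ℕ) / (4 * n)) := by linarith
    have hsq : (r * (i : ℕ) / (4 * n)) * (r * (i : ℕ) / (4 * n)) = (r / 2) * (r / 2) := by
      calc (r * (i : ℕ) / (4 * n)) * (r * (i : ℕ) / (4 * n))
          = (-(r * (i : ℕ) / (4 * n))) * (-(r * (i : ℕ) / (4 * n))) := by ring
        _ = (r / 2 * Real.cos (π * t)) * (r / 2 * Real.cos (π * t)) := by rw [hceq]
        _ = (r / 2) * (r / 2) * (Real.cos (π * t) ^ 2) := by ring
        _ = (r / 2) * (r / 2) := by rw [hcos2]; ring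
    linarith [mul_lt_mul'' hb2 hb2 hb1.le hb1.le]
  have hznez : ∀ i i' : Fin n, z i = z i' → i = i' := by
    intro i i' h
    have hc0 := congrArg (fun v => v i0) h
    simp only at hc0
    rw [hzi0, hzi0] at hc0
    have hd4 : (4 * (n:ℝ)) ≠ 0 := by positivity
    have h' : r * (i : ℕ) = r * (i' : ℕ) := by
      have heq : r * (i : ℕ) / (4 * n) = r * (i' : ℕ) / (4 * n) := by linarith
      rw [div_eq_div_iff hd4 hd4] at heq
      exact mul_right_cancel₀ hd4 heq
    have : ((i:ℕ):ℝ) = ((i':ℕ):ℝ) := mul_left_cancel₀ hrpos.ne' h'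
    exact Fin.ext (by exact_mod_cast this)
  have hinj : ∀ t, Function.Injective (pts t) := by
    intro t i i' h
    by_contra hne
    rw [hpts] at h
    simp only at h
    by_cases h0 : i = 0
    · subst h0
      by_cases h0' : i' = 0
      · exact hne h0'.symm
      · by_cases h1' : i' = 1
        · subst h1'
          rw [if_pos rfl, if_neg h01.symm, if_pos rfl] at h
          exact hXneY t h
        · rw [if_pos rfl, if_neg h0', if_neg h1'] at h
          exact hXnez t i' h0' h1' h
    · by_cases h1 : i = 1
      · subst h1
        by_cases h0' : i' = 0
        · subst h0'
          rw [if_neg h01.symm, if_pos rfl, if_pos rfl] at h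
          exact hXneY t h.symm
        · by_cases h1' : i' = 1
          · exact hne h1'.symm
          · rw [if_neg h01.symm, if_pos rfl, if_neg h0', if_neg h1'] at h
            exact hYnez t i' h0' h1' h
      · by_cases h0' : i' = 0
        · subst h0'
          rw [if_neg h0, if_neg h1, if_pos rfl] at h
          exact hXnez t i h0 h1 h.symm
        · by_cases h1' : i' = 1
          · subst h1'
            rw [if_neg h0, if_neg h1, if_neg h01.symm, if_pos rfl] at h
            exact hYnez t i h0 h1 h.symm
          · rw [if_neg h0, if_neg h1, if_neg h0', if_neg h1'] at h
            exact hne (hznez i i' h)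
  -- the determinant function
  obtain ⟨f, hf⟩ : ∃ f : ℝ → ℝ,
      f = fun t => (Matrix.of fun i j : Fin n => u j (pts t i)).det := ⟨_, rfl⟩
  have hcont : Continuous f := by
    rw [hf]
    apply Continuous.matrix_det
    apply continuous_matrix
    intro i j
    simp only [Matrix.of_apply, hpts]
    have hcos : Continuous fun t : ℝ => r / 2 * Real.cos (π * t) :=
      continuous_const.mul (Real.continuous_cos.comp (continuous_const.mul continuous_id))
    have hsin : Continuous fun t : ℝ => r / 2 * Real.sin (π * t) :=
      continuous_const.mul (Real.continuous_sin.comp (continuous_const.mul continuous_id))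
    have hcX : Continuous X := by
      rw [hX]
      exact continuous_const.add ((hcos.smul continuous_const).add (hsin.smul continuous_const))
    have hcY : Continuous Y := by
      rw [hY]
      exact continuous_const.sub ((hcos.smul continuous_const).add (hsin.smul continuous_const))
    by_cases h0 : i = 0
    · simp only [h0, if_pos]
      exact (hu j).comp hcX
    · by_cases h1 : i = 1
      · simp only [h1, if_neg h01.symm, if_pos]
        exact (hu j).comp hcY
      · simp only [if_neg h0, if_neg h1]
        exact continuous_const
  -- swap of rows at t = 1
  have hswap : pts 1 = pts 0 ∘ Equiv.swap (0 : Fin n) 1 := by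
    funext i
    have hX1 : X 1 = Y 0 := by
      simp only [hX, hY, Real.cos_pi, Real.sin_pi, Real.cos_zero, Real.sin_zero,
        mul_one, mul_zero]
      module
    have hY1 : Y 1 = X 0 := by
      simp only [hX, hY, Real.cos_pi, Real.sin_pi, Real.cos_zero, Real.sin_zero,
        mul_one, mul_zero]
      module
    by_cases h0 : i = 0
    · subst h0
      simp only [hpts, Function.comp_apply, Equiv.swap_apply_left, if_pos rfl,
        if_neg h01.symm]
      exact hX1
    · by_cases h1 : i = 1
      · subst h1
        simp only [hpts, Function.comp_apply, Equiv.swap_apply_right, if_pos rfl,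
          if_neg h01.symm]
        exact hY1
      · simp only [hpts, Function.comp_apply, Equiv.swap_apply_of_ne_of_ne h0 h1,
          if_neg h0, if_neg h1]
  have hf1 : f 1 = - f 0 := by
    have : (Matrix.of fun i j : Fin n => u j (pts 1 i)) =
        (Matrix.of fun i j : Fin n => u j (pts 0 i)).submatrix (Equiv.swap (0 : Fin n) 1) id := by
      ext i j
      simp [hswap, Matrix.submatrix_apply]
    rw [hf]
    simp only [this]
    rw [Matrix.det_permute]
    rw [Equiv.Perm.sign_swap h01]
    simp
  -- intermediate value theorem
  have h0mem : (0 : ℝ) ∈ Set.uIcc (f 0) (f 1) := by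
    rw [hf1, Set.mem_uIcc]
    rcases le_total (f 0) 0 with h | h
    · exact Or.inl ⟨h, by linarith⟩
    · exact Or.inr ⟨by linarith, h⟩
  obtain ⟨t, _, ht⟩ := intermediate_value_uIcc (hcont.continuousOn (s := Set.uIcc 0 1)) h0mem
  simp only [hf] at ht
  exact ⟨pts t, hinj t, hmem t, ht⟩
end
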